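/- arXiv:0908.1102 — 2 statements merged into one kernel-verified Lean document; each statement's English description precedes it below -/
import Mathlib

section
/- If γ is an arrow of the Rauzy diagram with involution starting at π and ending at π', then (B_γ*)^{-1} · Θ_π ⊆ Θ_{π'}; that is, the open cone of admissible suspension data Θ is forward-invariant under the inverse transpose of the transition matrix. -/
open Finset

namespace Rauzy

/-- The alphabet with `2*d` letters. -/
abbrev Letter (d : ℕ) := Fin (2*d)
/-- Positions `1, …, 2d+1` (0-indexed). -/
abbrev Pos (d : ℕ) := Fin (2*d+1)
/-- Combinatorial data: a bijection from `A ∪ {*}` (with `none = *`) to positions. -/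
abbrev RPerm (d : ℕ) := Option (Letter d) ≃ Pos d

/-- A fixed-point-free involution of the alphabet. -/
structure Inv (d : ℕ) where
  i : Letter d → Letter d
  invol : ∀ a, i (i a) = a
  nofix : ∀ a, i a ≠ a

variable {d : ℕ}

/-- Admissibility: neither `i(A_l) ⊆ A_r` nor `i(A_r) ⊆ A_l`. -/
def Admissible (I : Inv d) (π : RPerm d) : Prop :=
  ¬ (∀ a : Letter d, π (some a) < π none → π none < π (some (I.i a))) ∧
  ¬ (∀ a : Letter d, π none < π (some a) → π (some (I.i a)) < π none)

/-- A vector indexed by letters represents a vector indexed by involution classes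
iff it is symmetric under the involution. -/
def Sym (I : Inv d) (v : Letter d → ℝ) : Prop := ∀ a, v (I.i a) = v a

/-- The balance condition defining the hyperplane `S_π`. -/
def Balanced (π : RPerm d) (v : Letter d → ℝ) : Prop :=
  ∑ a ∈ univ.filter (fun a => π (some a) < π none), v a
    = ∑ a ∈ univ.filter (fun a => π none < π (some a)), v a

def Positive (v : Letter d → ℝ) : Prop := ∀ a, 0 < v a

/-- Membership in `S_π` (as a vector in `ℝ^{A/i}`, in letter coordinates). -/
def MemS (I : Inv d) (π : RPerm d) (v : Letter d → ℝ) : Prop := Sym I v ∧ Balanced π v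

/-- The open cone `Θ_π` of admissible suspension data. -/
def MemTheta (I : Inv d) (π : RPerm d) (τ : Letter d → ℝ) : Prop :=
  MemS I π τ ∧
  (∀ k : Pos d, π none < k → (k : ℕ) < 2*d →
    0 < ∑ a ∈ univ.filter (fun a => π none < π (some a) ∧ π (some a) ≤ k), τ a) ∧
  (∀ k : Pos d, 0 < (k : ℕ) → k < π none →
    ∑ a ∈ univ.filter (fun a => k ≤ π (some a) ∧ π (some a) < π none), τ a < 0)

/-- The cone `Θ'_π`: non-strict inequalities, excluding `0`. -/
def MemTheta' (I : Inv d) (π : RPerm d) (τ : Letter d → ℝ) : Prop :=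
  MemS I π τ ∧ τ ≠ 0 ∧
  (∀ k : Pos d, π none < k → (k : ℕ) < 2*d →
    0 ≤ ∑ a ∈ univ.filter (fun a => π none < π (some a) ∧ π (some a) ≤ k), τ a) ∧
  (∀ k : Pos d, 0 < (k : ℕ) → k < π none →
    ∑ a ∈ univ.filter (fun a => k ≤ π (some a) ∧ π (some a) < π none), τ a ≤ 0)

/-- The linear operator `Ω(π)` applied to a vector:
`(Ω(π)·v)_α = Σ_{π(ξ)>π(i(α))} v_ξ − Σ_{π(ξ)<π(α)} v_ξ`. -/
def omegaApply (I : Inv d) (π : RPerm d) (v : Letter d → ℝ) (a : Letter d) : ℝ :=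
  (∑ x ∈ univ.filter (fun x => π (some (I.i a)) < π (some x)), v x)
  - ∑ x ∈ univ.filter (fun x => π (some x) < π (some a)), v x

/-- The left operation: the rightmost letter `β` is inserted immediately after `i(α)`,
where `α` is the leftmost letter; both permutations are admissible. -/
def LeftOpTo (I : Inv d) (π π' : RPerm d) : Prop :=
  Admissible I π ∧ Admissible I π' ∧
  ∃ α β : Letter d, π (some α) = 0 ∧ π (some β) = Fin.last (2*d) ∧ β ≠ I.i α ∧
    (∀ x, π x ≤ π (some (I.i α)) → π' x = π x) ∧
    ((π' (some β) : ℕ) = (π (some (I.i α)) : ℕ) + 1) ∧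
    (∀ x, x ≠ some β → π (some (I.i α)) < π x → (π' x : ℕ) = (π x : ℕ) + 1)

/-- The right operation: the leftmost letter `α` is inserted immediately before `i(β)`,
where `β` is the rightmost letter; both permutations are admissible. -/
def RightOpTo (I : Inv d) (π π' : RPerm d) : Prop :=
  Admissible I π ∧ Admissible I π' ∧
  ∃ α β : Letter d, π (some α) = 0 ∧ π (some β) = Fin.last (2*d) ∧ α ≠ I.i β ∧
    (∀ x, π (some (I.i β)) ≤ π x → π' x = π x) ∧
    ((π' (some α) : ℕ) + 1 = (π (some (I.i β)) : ℕ)) ∧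
    (∀ x, x ≠ some α → π x < π (some (I.i β)) → (π' x : ℕ) + 1 = (π x : ℕ))

/-- An arrow of the Rauzy diagram with involution, with its winner and loser. -/
structure Arrow (d : ℕ) (I : Inv d) where
  src : RPerm d
  dst : RPerm d
  winner : Letter d
  loser : Letter d
  ok : (LeftOpTo I src dst ∧ src (some winner) = 0 ∧ src (some loser) = Fin.last (2*d))
     ∨ (RightOpTo I src dst ∧ src (some loser) = 0 ∧ src (some winner) = Fin.last (2*d))

/-- A list of arrows is a path if consecutive arrows match. -/
def IsPathList (I : Inv d) (l : List (Arrow d I)) : Prop :=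
  l.Chain' (fun a b => a.dst = b.src)

/-- `B_γ` for an arrow `γ`: `B·e_ξ̲ = e_ξ̲` for `ξ̲ ≠ α̲` and `B·e_α̲ = e_α̲ + e_β̲`
(winner `α`, loser `β`), acting on vectors in letter coordinates. -/
def arrowB (I : Inv d) (a : Arrow d I) (v : Letter d → ℝ) : Letter d → ℝ :=
  fun x => v x + (if x = a.loser ∨ x = I.i a.loser then v a.winner else 0)

/-- The transpose `B*_γ` for an arrow `γ`. -/
def arrowBt (I : Inv d) (a : Arrow d I) (v : Letter d → ℝ) : Letter d → ℝ :=
  fun x => v x + (if x = a.winner ∨ x = I.i a.winner then v a.loser else 0)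

/-- The inverse transpose `(B*_γ)⁻¹` for an arrow `γ`. -/
def arrowBtInv (I : Inv d) (a : Arrow d I) (v : Letter d → ℝ) : Letter d → ℝ :=
  fun x => v x - (if x = a.winner ∨ x = I.i a.winner then v a.loser else 0)

/-- `B_γ = B_{γ_n} ⋯ B_{γ_1}` for a path `γ = γ_1 … γ_n`. -/
def pathB (I : Inv d) (l : List (Arrow d I)) (v : Letter d → ℝ) : Letter d → ℝ :=
  l.foldl (fun w a => arrowB I a w) v

/-- `B*_γ = B*_{γ_1} ⋯ B*_{γ_n}`. -/
def pathBt (I : Inv d) (l : List (Arrow d I)) (v : Letter d → ℝ) : Letter d → ℝ :=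
  l.foldr (fun a w => arrowBt I a w) v

/-- `(B*_γ)⁻¹ = (B*_{γ_n})⁻¹ ⋯ (B*_{γ_1})⁻¹`. -/
def pathBtInv (I : Inv d) (l : List (Arrow d I)) (v : Letter d → ℝ) : Letter d → ℝ :=
  l.foldl (fun w a => arrowBtInv I a w) v

/-- The canonical basis vector of `ℝ^{A/i}` for the class of `y`, in letter coordinates. -/
def classBasis (I : Inv d) (y : Letter d) : Letter d → ℝ :=
  fun x => if x = y ∨ x = I.i y then 1 else 0

/-- A path is positive if all the entries of the matrix `B_γ` (over classes) are positive. -/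
def PositivePath (I : Inv d) (l : List (Arrow d I)) : Prop :=
  ∀ x y : Letter d, 0 < pathB I l (classBasis I y) x

/-- A path is complete if every involution class is the winner of some arrow. -/
def CompletePath (I : Inv d) (l : List (Arrow d I)) : Prop :=
  ∀ x : Letter d, ∃ a ∈ l, a.winner = x ∨ a.winner = I.i x

/-- A `k`-complete path is a concatenation of `k` complete paths. -/
def KComplete (I : Inv d) (k : ℕ) (l : List (Arrow d I)) : Prop :=
  ∃ ls : List (List (Arrow d I)), ls.length = k ∧ l = ls.flatten ∧ ∀ s ∈ ls, CompletePath I s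

/-- Invariance of a set of permutations under the left and right operations. -/
def OpInvariant (I : Inv d) (R : Set (RPerm d)) : Prop :=
  ∀ π ∈ R, ∀ π', (LeftOpTo I π π' ∨ RightOpTo I π π') → π' ∈ R

/-- A Rauzy class with involution: a minimal nonempty invariant set of admissible
permutations in which every involution class wins some arrow. -/
def IsRauzyClass (I : Inv d) (R : Set (RPerm d)) : Prop :=
  R.Nonempty ∧ (∀ π ∈ R, Admissible I π) ∧ OpInvariant I R ∧
  (∀ R' ⊆ R, R'.Nonempty → OpInvariant I R' → R' = R) ∧
  (∀ x : Letter d, ∃ a : Arrow d I, a.src ∈ R ∧ a.dst ∈ R ∧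
    (a.winner = x ∨ a.winner = I.i x))

/-- A permutation is irreducible if it belongs to a Rauzy class with involution. -/
def Irreducible (I : Inv d) (π : RPerm d) : Prop :=
  ∃ R, IsRauzyClass I R ∧ π ∈ R

/-- The vector `v_π = Σ_{π(x)<π(*)} e_x̲ − Σ_{π(x)>π(*)} e_x̲`, in letter coordinates. -/
def vpi (I : Inv d) (π : RPerm d) (x : Letter d) : ℝ :=
  (if π (some x) < π none then 1 else -1) + (if π (some (I.i x)) < π none then 1 else -1)

/-! Encode `τ` by its prefix sums `S j = ∑_{π(ξ) < j} τ_ξ`. Then `τ ∈ Θ_π` says exactly that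
`τ` is symmetric, `S (2d+1) = 2 S p` where `p = π(*)`, and `S j > S p` at every cut `0 < j ≤ 2d`
other than the two cuts `p`, `p + 1` adjacent to `*`. An arrow with winner `α` and loser `β`
carries `β` next to `i(α)` and subtracts `τ_β` from both copies of `α`: every new prefix sum is an
old one shifted by `-τ_β`, except at the new cut between `β` and `i(α)`, where it exceeds a shifted
old one by `τ_α - τ_β` (left move) or `τ_β - τ_α` (right move). The conditions at the cuts `1` and
`2d` say that the leftmost datum exceeds the rightmost one, which is the positivity of that
excess. -/

lemma Inv.i_eq_iff (I : Inv d) {x y : Letter d} : I.i x = y ↔ x = I.i y :=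
  ⟨fun h => h ▸ (I.invol x).symm, fun h => h ▸ I.invol y⟩

lemma val_apply_ne (π : RPerm d) {x y : Option (Letter d)} (h : x ≠ y) : (π x : ℕ) ≠ π y :=
  fun hxy => h (π.injective (Fin.val_injective hxy))

def prefixSum (π : RPerm d) (τ : Letter d → ℝ) (j : ℕ) : ℝ :=
  ∑ a, if (π (some a) : ℕ) < j then τ a else 0

section prefixSum

variable (π π' : RPerm d) (τ : Letter d → ℝ)

@[simp] lemma prefixSum_zero : prefixSum π τ 0 = 0 := by
  simp [prefixSum]

lemma prefixSum_succ_of_eq {a : Letter d} {j : ℕ} (h : (π (some a) : ℕ) = j) :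
    prefixSum π τ (j + 1) = prefixSum π τ j + τ a := by
  rw [prefixSum, prefixSum, ← Fintype.sum_ite_eq' a τ, ← Finset.sum_add_distrib]
  refine Finset.sum_congr rfl fun b _ => ?_
  rcases eq_or_ne b a with rfl | hb
  · simp [h]
  · have : (π (some b) : ℕ) ≠ j := h ▸ val_apply_ne π (Option.some_injective _ |>.ne hb)
    simp only [hb, if_false, add_zero]
    split_ifs <;> first | rfl | omega

lemma prefixSum_succ_of_none {j : ℕ} (h : (π none : ℕ) = j) :
    prefixSum π τ (j + 1) = prefixSum π τ j := by
  refine Finset.sum_congr rfl fun b _ => ?_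
  have : (π (some b) : ℕ) ≠ j := h ▸ val_apply_ne π (Option.some_ne_none b)
  split_ifs <;> first | rfl | omega

lemma prefixSum_sub_eq_of_lt_iff (l : Letter d) {j j' : ℕ}
    (h : ∀ a ≠ l, (π' (some a) : ℕ) < j ↔ (π (some a) : ℕ) < j') :
    prefixSum π' τ j - (if (π' (some l) : ℕ) < j then τ l else 0)
      = prefixSum π τ j' - (if (π (some l) : ℕ) < j' then τ l else 0) := by
  simp only [prefixSum, ← Finset.add_sum_erase univ _ (mem_univ l), add_sub_cancel_left]
  exact Finset.sum_congr rfl fun a ha => if_congr (h a (ne_of_mem_erase ha)) rfl rfl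

lemma prefixSum_arrowBtInv {I : Inv d} (a : Arrow d I) (j : ℕ) :
    prefixSum π (arrowBtInv I a τ) j
      = prefixSum π τ j - (if (π (some a.winner) : ℕ) < j then τ a.loser else 0)
          - (if (π (some (I.i a.winner)) : ℕ) < j then τ a.loser else 0) := by
  have hw : I.i a.winner ≠ a.winner := I.nofix a.winner
  simp only [prefixSum, arrowBtInv]
  rw [← Fintype.sum_ite_eq' a.winner fun x => if (π (some x) : ℕ) < j then τ a.loser else 0,
    ← Fintype.sum_ite_eq' (I.i a.winner) fun x => if (π (some x) : ℕ) < j then τ a.loser else 0,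
    ← Finset.sum_sub_distrib, ← Finset.sum_sub_distrib]
  refine Finset.sum_congr rfl fun b _ => ?_
  by_cases h1 : b = a.winner <;> by_cases h2 : b = I.i a.winner <;> simp_all <;> split_ifs <;> ring

end prefixSum

section theta

variable (π : RPerm d) (τ : Letter d → ℝ)

lemma sum_filter_Ico_eq_prefixSum_sub {lo hi : ℕ} (h : lo ≤ hi) :
    ∑ a ∈ univ.filter (fun a => lo ≤ (π (some a) : ℕ) ∧ (π (some a) : ℕ) < hi), τ a
      = prefixSum π τ hi - prefixSum π τ lo := by
  rw [Finset.sum_filter, prefixSum, prefixSum, ← Finset.sum_sub_distrib]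
  refine Finset.sum_congr rfl fun a _ => ?_
  split_ifs <;> first | ring1 | omega

lemma sum_filter_star_lt_le_eq (k : Pos d) (hk : π none ≤ k) :
    ∑ a ∈ univ.filter (fun a => π none < π (some a) ∧ π (some a) ≤ k), τ a
      = prefixSum π τ (k + 1) - prefixSum π τ (π none) := by
  rw [Fin.le_def] at hk
  rw [← prefixSum_succ_of_none π τ rfl, ← sum_filter_Ico_eq_prefixSum_sub π τ (by omega)]
  refine Finset.sum_congr (Finset.filter_congr fun a _ => ?_) fun _ _ => rfl
  have := val_apply_ne π (Option.some_ne_none a)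
  simp only [Fin.lt_def, Fin.le_def]
  omega

lemma sum_filter_le_lt_star_eq (k : Pos d) (hk : k ≤ π none) :
    ∑ a ∈ univ.filter (fun a => k ≤ π (some a) ∧ π (some a) < π none), τ a
      = prefixSum π τ (π none) - prefixSum π τ k := by
  rw [← sum_filter_Ico_eq_prefixSum_sub π τ hk]
  refine Finset.sum_congr (Finset.filter_congr fun a _ => ?_) fun _ _ => rfl
  simp only [Fin.lt_def, Fin.le_def]

lemma balanced_iff_prefixSum :
    Balanced π τ ↔ prefixSum π τ (2 * d + 1) = 2 * prefixSum π τ (π none) := by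
  have hleft : ∑ a ∈ univ.filter (fun a => π (some a) < π none), τ a
      = prefixSum π τ (π none) := by
    rw [← sub_zero (prefixSum π τ _), ← prefixSum_zero π τ,
      ← sum_filter_Ico_eq_prefixSum_sub π τ (Nat.zero_le _)]
    refine Finset.sum_congr (Finset.filter_congr fun a _ => ?_) fun _ _ => rfl
    simp only [Fin.lt_def, zero_le, true_and]
  have hright : ∑ a ∈ univ.filter (fun a => π none < π (some a)), τ a
      = prefixSum π τ (2 * d + 1) - prefixSum π τ (π none) := by
    rw [← prefixSum_succ_of_none π τ rfl, ← sum_filter_Ico_eq_prefixSum_sub π τ (by omega)]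
    refine Finset.sum_congr (Finset.filter_congr fun a _ => ?_) fun _ _ => rfl
    simp only [Fin.lt_def]
    omega
  rw [Balanced, hleft, hright]
  constructor <;> intro h <;> linarith

theorem memTheta_iff (I : Inv d) :
    MemTheta I π τ ↔ Sym I τ ∧ prefixSum π τ (2 * d + 1) = 2 * prefixSum π τ (π none) ∧
      ∀ j, 0 < j → j ≤ 2 * d → j ≠ π none → j ≠ π none + 1 →
        prefixSum π τ (π none) < prefixSum π τ j := by
  simp only [MemTheta, MemS, balanced_iff_prefixSum, and_assoc]
  refine and_congr_right fun _ => and_congr_right fun _ => ⟨?_, fun h => ⟨?_, ?_⟩⟩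
  · rintro ⟨hpos, hneg⟩ j hj0 hj hjP hjP'
    rcases lt_or_gt_of_ne hjP with hjP | hjP
    · have := hneg ⟨j, by omega⟩ hj0 (Fin.mk_lt_of_lt_val hjP)
      rw [sum_filter_le_lt_star_eq π τ _ (Fin.mk_le_of_le_val hjP.le)] at this
      linarith
    · have := hpos ⟨j - 1, by omega⟩ (Fin.lt_def.2 (by simp; omega)) (by simp; omega)
      rw [sum_filter_star_lt_le_eq π τ _ (Fin.le_def.2 (by simp; omega)),
        show j - 1 + 1 = j by omega] at this
      linarith
  · intro k hk hk'
    rw [sum_filter_star_lt_le_eq π τ k hk.le, sub_pos]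
    rw [Fin.lt_def] at hk
    exact h (k + 1) (by omega) (by omega) (by omega) (by omega)
  · intro k hk hk'
    rw [sum_filter_le_lt_star_eq π τ k hk'.le, sub_neg]
    rw [Fin.lt_def] at hk'
    exact h k hk (by omega) (by omega) (by omega)

end theta

lemma Admissible.star_bounds {I : Inv d} {π : RPerm d} (h : Admissible I π) :
    2 ≤ (π none : ℕ) ∧ (π none : ℕ) + 2 ≤ 2 * d := by
  obtain ⟨hl, hr⟩ := h
  push Not at hl hr
  obtain ⟨a, ha, ha'⟩ := hl
  obtain ⟨b, hb, hb'⟩ := hr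
  have := val_apply_ne π (Option.some_ne_none (I.i a))
  have := val_apply_ne π (Option.some_ne_none (I.i b))
  have := val_apply_ne π (Option.some_injective _ |>.ne (I.nofix a))
  have := val_apply_ne π (Option.some_injective _ |>.ne (I.nofix b))
  simp only [Fin.lt_def, Fin.le_def] at ha ha' hb hb'
  omega

section MemTheta

variable {I : Inv d} {π : RPerm d} {τ : Letter d → ℝ}

lemma MemTheta.prefixSum_star_le (hτ : MemTheta I π τ) {j : ℕ} (hj0 : 0 < j)
    (hj : j ≤ 2 * d) : prefixSum π τ (π none) ≤ prefixSum π τ j := by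
  by_cases hjP : j = π none + 1
  · rw [hjP, prefixSum_succ_of_none π τ rfl]
  by_cases hjP' : j = π none
  · rw [hjP']
  exact ((memTheta_iff π τ I).1 hτ).2.2 j hj0 hj hjP' hjP |>.le

lemma MemTheta.lt_of_first_of_last (hτ : MemTheta I π τ) (hadm : Admissible I π)
    {a b : Letter d} (ha : π (some a) = 0) (hb : π (some b) = Fin.last (2 * d)) : τ b < τ a := by
  obtain ⟨-, hbal, hgt⟩ := (memTheta_iff π τ I).1 hτ
  have hP := hadm.star_bounds
  have hfirst : prefixSum π τ 1 = τ a := by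
    simpa using prefixSum_succ_of_eq π τ (j := 0) (by simp [ha])
  have hlast : prefixSum π τ (2 * d + 1) = prefixSum π τ (2 * d) + τ b :=
    prefixSum_succ_of_eq π τ (by simp [hb])
  have := hgt 1 one_pos (by omega) (by omega) (by omega)
  have := hgt (2 * d) (by omega) le_rfl (by omega) (by omega)
  linarith

lemma Sym.arrowBtInv (hτ : Sym I τ) (a : Arrow d I) : Sym I (arrowBtInv I a τ) := by
  intro x
  simp only [Rauzy.arrowBtInv, hτ x, I.i_eq_iff, I.invol, or_comm]

end MemTheta

section moves

variable {π π' : RPerm d}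

lemma prefixSum_of_insertAfter (τ : Letter d → ℝ) {l : Letter d} {q : ℕ}
    (hlq : q < π (some l))
    (hmove : ∀ a ≠ l, (π' (some a) : ℕ) =
      if (π (some a) : ℕ) ≤ q then (π (some a) : ℕ) else π (some a) + 1)
    (hl' : (π' (some l) : ℕ) = q + 1) {j : ℕ} (hj : j ≤ π (some l) + 1) :
    prefixSum π' τ j =
      if j ≤ q + 1 then prefixSum π τ j else prefixSum π τ (j - 1) + τ l := by
  split_ifs with hjq
  · have := prefixSum_sub_eq_of_lt_iff π π' τ l (j := j) (j' := j) fun a ha => by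
      rw [hmove a ha]; split_ifs <;> omega
    rwa [if_neg (by omega), if_neg (by omega), sub_zero, sub_zero] at this
  · have := prefixSum_sub_eq_of_lt_iff π π' τ l (j := j) (j' := j - 1) fun a ha => by
      rw [hmove a ha]; split_ifs <;> omega
    rw [if_pos (by omega), if_neg (by omega), sub_zero] at this
    linarith

lemma prefixSum_of_insertBefore (τ : Letter d → ℝ) {l : Letter d} {q : ℕ}
    (hl : π (some l) = 0)
    (hmove : ∀ a ≠ l, (π' (some a) : ℕ) =
      if q ≤ (π (some a) : ℕ) then (π (some a) : ℕ) else π (some a) - 1)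
    (hl' : (π' (some l) : ℕ) + 1 = q) (j : ℕ) :
    prefixSum π' τ j = if j < q then prefixSum π τ (j + 1) - τ l else prefixSum π τ j := by
  have hpos : ∀ a ≠ l, 0 < (π (some a) : ℕ) := fun a ha => by
    have := val_apply_ne π (Option.some_injective _ |>.ne ha)
    simp only [hl, Fin.val_zero] at this
    omega
  split_ifs with hjq
  · have := prefixSum_sub_eq_of_lt_iff π π' τ l (j := j) (j' := j + 1) fun a ha => by
      have := hpos a ha
      rw [hmove a ha]; split_ifs <;> omega
    rw [if_neg (by omega), if_pos (by simp [hl]), sub_zero] at this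
    linarith
  · have := prefixSum_sub_eq_of_lt_iff π π' τ l (j := j) (j' := j) fun a ha => by
      rw [hmove a ha]; split_ifs <;> omega
    rwa [if_pos (by omega), if_pos (by simp [hl]; omega), sub_left_inj] at this

variable {I : Inv d} {w l : Letter d}

lemma LeftOpTo.val_apply (hL : LeftOpTo I π π') (hw : π (some w) = 0)
    (hl : π (some l) = Fin.last (2 * d)) :
    (0 < (π (some (I.i w)) : ℕ) ∧ (π (some (I.i w)) : ℕ) < 2 * d) ∧
      (π' (some l) : ℕ) = π (some (I.i w)) + 1 ∧
      ∀ x ≠ some l, (π' x : ℕ) =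
        if (π x : ℕ) ≤ π (some (I.i w)) then (π x : ℕ) else π x + 1 := by
  obtain ⟨-, -, α, β, hα, hβ, hβα, hkeep, hins, hshift⟩ := hL
  obtain rfl : α = w := Option.some_injective _ (π.injective (hα.trans hw.symm))
  obtain rfl : β = l := Option.some_injective _ (π.injective (hβ.trans hl.symm))
  have h0 := val_apply_ne π (Option.some_injective _ |>.ne (I.nofix α))
  have h2d := val_apply_ne π (Option.some_injective _ |>.ne hβα.symm)
  simp only [hα, hβ, Fin.val_zero, Fin.val_last] at h0 h2d
  refine ⟨⟨by omega, by omega⟩, hins, fun x hx => ?_⟩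
  split_ifs with h
  · rw [hkeep x (Fin.le_def.2 h)]
  · exact hshift x hx (Fin.lt_def.2 (by omega))

lemma RightOpTo.val_apply (hR : RightOpTo I π π') (hl : π (some l) = 0)
    (hw : π (some w) = Fin.last (2 * d)) :
    (0 < (π (some (I.i w)) : ℕ) ∧ (π (some (I.i w)) : ℕ) < 2 * d) ∧
      (π' (some l) : ℕ) + 1 = π (some (I.i w)) ∧
      ∀ x ≠ some l, (π' x : ℕ) =
        if (π (some (I.i w)) : ℕ) ≤ π x then (π x : ℕ) else π x - 1 := by
  obtain ⟨-, -, α, β, hα, hβ, hαβ, hkeep, hins, hshift⟩ := hR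
  obtain rfl : α = l := Option.some_injective _ (π.injective (hα.trans hl.symm))
  obtain rfl : β = w := Option.some_injective _ (π.injective (hβ.trans hw.symm))
  have h0 := val_apply_ne π (Option.some_injective _ |>.ne hαβ.symm)
  have h2d := val_apply_ne π (Option.some_injective _ |>.ne (I.nofix β))
  simp only [hα, hβ, Fin.val_zero, Fin.val_last] at h0 h2d
  refine ⟨⟨by omega, by omega⟩, hins, fun x hx => ?_⟩
  split_ifs with h
  · rw [hkeep x (Fin.le_def.2 h)]
  · have := hshift x hx (Fin.lt_def.2 (by omega))
    omega

end moves

section steps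

variable {I : Inv d} {a : Arrow d I} {τ : Letter d → ℝ}

lemma prefixSum_arrowBtInv_of_leftOpTo (hL : LeftOpTo I a.src a.dst)
    (hw : a.src (some a.winner) = 0) (hl : a.src (some a.loser) = Fin.last (2 * d)) {q : ℕ}
    (hq : (a.src (some (I.i a.winner)) : ℕ) = q) :
    (∀ j, 0 < j → j ≤ q →
      prefixSum a.dst (arrowBtInv I a τ) j = prefixSum a.src τ j - τ a.loser) ∧
    prefixSum a.dst (arrowBtInv I a τ) (q + 1) = prefixSum a.src τ (q + 1) - 2 * τ a.loser ∧
    (∀ j, q + 2 ≤ j → j ≤ 2 * d + 1 →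
      prefixSum a.dst (arrowBtInv I a τ) j = prefixSum a.src τ (j - 1) - τ a.loser) := by
  subst hq
  obtain ⟨hq, hl', hmove⟩ := hL.val_apply hw hl
  have hw0 : (a.src (some a.winner) : ℕ) = 0 := by simp [hw]
  have hl2d : (a.src (some a.loser) : ℕ) = 2 * d := by simp [hl]
  have hwl : some a.winner ≠ some a.loser := fun h => by
    rw [Option.some_inj.1 h, hl2d] at hw0; omega
  have hiwl : some (I.i a.winner) ≠ some a.loser := fun h => by
    rw [Option.some_inj.1 h, hl2d] at hq; omega
  have hS' : ∀ j ≤ 2 * d + 1, prefixSum a.dst (arrowBtInv I a τ) j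
      = (if j ≤ a.src (some (I.i a.winner)) + 1 then prefixSum a.src τ j
          else prefixSum a.src τ (j - 1) + τ a.loser)
        - (if 0 < j then τ a.loser else 0)
        - (if (a.src (some (I.i a.winner)) : ℕ) < j then τ a.loser else 0) := fun j hj => by
    rw [prefixSum_arrowBtInv, hmove _ hwl, hmove _ hiwl, hw0, if_pos (Nat.zero_le _),
      if_pos le_rfl, prefixSum_of_insertAfter τ (by omega) (fun b hb => hmove _ (by simpa)) hl'
        (by omega)]
  refine ⟨fun j h0 hj => ?_, ?_, fun j hj hj' => ?_⟩
  · rw [hS' j (by omega), if_pos (by omega), if_pos h0, if_neg (by omega), sub_zero]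
  · rw [hS' _ (by omega), if_pos le_rfl, if_pos (by omega), if_pos (by omega)]
    ring
  · rw [hS' j hj', if_neg (by omega), if_pos (by omega), if_pos (by omega)]
    ring

lemma prefixSum_arrowBtInv_of_rightOpTo (hR : RightOpTo I a.src a.dst)
    (hl : a.src (some a.loser) = 0) (hw : a.src (some a.winner) = Fin.last (2 * d)) {q : ℕ}
    (hq : (a.src (some (I.i a.winner)) : ℕ) = q) :
    (∀ j < q, prefixSum a.dst (arrowBtInv I a τ) j = prefixSum a.src τ (j + 1) - τ a.loser) ∧
    prefixSum a.dst (arrowBtInv I a τ) q = prefixSum a.src τ q ∧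
    (∀ j, q < j → j ≤ 2 * d →
      prefixSum a.dst (arrowBtInv I a τ) j = prefixSum a.src τ j - τ a.loser) ∧
    prefixSum a.dst (arrowBtInv I a τ) (2 * d + 1)
      = prefixSum a.src τ (2 * d + 1) - 2 * τ a.loser := by
  subst hq
  obtain ⟨hq, hl', hmove⟩ := hR.val_apply hl hw
  have hl0 : (a.src (some a.loser) : ℕ) = 0 := by simp [hl]
  have hw2d : (a.src (some a.winner) : ℕ) = 2 * d := by simp [hw]
  have hwl : some a.winner ≠ some a.loser := fun h => by
    rw [Option.some_inj.1 h, hl0] at hw2d; omega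
  have hiwl : some (I.i a.winner) ≠ some a.loser := fun h => by
    rw [Option.some_inj.1 h, hl0] at hq; omega
  have hS' : ∀ j, prefixSum a.dst (arrowBtInv I a τ) j
      = (if j < a.src (some (I.i a.winner)) then prefixSum a.src τ (j + 1) - τ a.loser
          else prefixSum a.src τ j)
        - (if 2 * d < j then τ a.loser else 0)
        - (if (a.src (some (I.i a.winner)) : ℕ) < j then τ a.loser else 0) := fun j => by
    rw [prefixSum_arrowBtInv, hmove _ hwl, hmove _ hiwl, hw2d, if_pos hq.2.le, if_pos le_rfl,
      prefixSum_of_insertBefore τ hl (fun b hb => hmove _ (by simpa)) hl']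
  refine ⟨fun j hj => ?_, ?_, fun j hj hj' => ?_, ?_⟩
  · rw [hS' j, if_pos hj, if_neg (by omega), if_neg (by omega), sub_zero, sub_zero]
  · rw [hS', if_neg (lt_irrefl _), if_neg (by omega), if_neg (lt_irrefl _), sub_zero, sub_zero]
  · rw [hS' j, if_neg (by omega), if_neg (by omega), if_pos hj, sub_zero]
  · rw [hS', if_neg (by omega), if_pos (by omega), if_pos (by omega)]
    ring

theorem memTheta_arrowBtInv_of_leftOpTo (hL : LeftOpTo I a.src a.dst)
    (hw : a.src (some a.winner) = 0) (hl : a.src (some a.loser) = Fin.last (2 * d))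
    (hτ : MemTheta I a.src τ) : MemTheta I a.dst (arrowBtInv I a τ) := by
  have hP := hL.1.star_bounds
  have hwin := hτ.lt_of_first_of_last hL.1 hw hl
  obtain ⟨hsym, hbal, hgt⟩ := (memTheta_iff _ _ I).1 hτ
  obtain ⟨⟨hq0, hq2d⟩, -, hmove⟩ := hL.val_apply hw hl
  have hqP := val_apply_ne a.src (Option.some_ne_none (I.i a.winner))
  have hSq := prefixSum_succ_of_eq a.src τ (a := I.i a.winner) rfl
  generalize hq : (a.src (some (I.i a.winner)) : ℕ) = q at hq0 hq2d hmove hqP hSq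
  obtain ⟨hlow, hmid, hhigh⟩ := prefixSum_arrowBtInv_of_leftOpTo (τ := τ) hL hw hl hq
  have hP' : (a.src none < q ∧ (a.dst none : ℕ) = a.src none) ∨
      (q < a.src none ∧ (a.dst none : ℕ) = a.src none + 1) := by
    rw [hmove none (Option.some_ne_none _).symm]
    split_ifs <;> omega
  have hSP' : prefixSum a.dst (arrowBtInv I a τ) (a.dst none)
      = prefixSum a.src τ (a.src none) - τ a.loser := by
    rcases hP' with ⟨h, h'⟩ | ⟨h, h'⟩ <;> rw [h']
    · exact hlow _ (by omega) h.le
    · exact hhigh _ (by omega) (by omega)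
  refine (memTheta_iff _ _ I).2 ⟨hsym.arrowBtInv a, ?_, fun j hj0 hj hjP hjP' => ?_⟩
  · have := prefixSum_succ_of_eq a.src τ (a := a.loser) (j := 2 * d) (by simp [hl])
    rw [hSP', hhigh _ (by omega) le_rfl, Nat.add_sub_cancel]
    linarith
  rw [hSP']
  rcases lt_trichotomy j (q + 1) with hj1 | rfl | hj1
  · rw [hlow j hj0 (by omega)]
    linarith [hgt j hj0 hj (by omega) (by omega)]
  · rw [hmid, hSq, hsym]
    linarith [hτ.prefixSum_star_le hq0 hq2d.le]
  · rw [hhigh j hj1 (by omega)]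
    linarith [hgt (j - 1) (by omega) (by omega) (by omega) (by omega)]

theorem memTheta_arrowBtInv_of_rightOpTo (hR : RightOpTo I a.src a.dst)
    (hl : a.src (some a.loser) = 0) (hw : a.src (some a.winner) = Fin.last (2 * d))
    (hτ : MemTheta I a.src τ) : MemTheta I a.dst (arrowBtInv I a τ) := by
  have hP := hR.1.star_bounds
  have hwin := hτ.lt_of_first_of_last hR.1 hl hw
  obtain ⟨hsym, hbal, hgt⟩ := (memTheta_iff _ _ I).1 hτ
  obtain ⟨⟨hq0, hq2d⟩, -, hmove⟩ := hR.val_apply hl hw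
  have hqP := val_apply_ne a.src (Option.some_ne_none (I.i a.winner))
  have hSq := prefixSum_succ_of_eq a.src τ (a := I.i a.winner) rfl
  generalize hq : (a.src (some (I.i a.winner)) : ℕ) = q at hq0 hq2d hmove hqP hSq
  obtain ⟨hlow, hmid, hhigh, hend⟩ := prefixSum_arrowBtInv_of_rightOpTo (τ := τ) hR hl hw hq
  have hP' : (a.src none < q ∧ (a.dst none : ℕ) = a.src none - 1) ∨
      (q < a.src none ∧ (a.dst none : ℕ) = a.src none) := by
    rw [hmove none (Option.some_ne_none _).symm]
    split_ifs <;> omega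
  have hSP' : prefixSum a.dst (arrowBtInv I a τ) (a.dst none)
      = prefixSum a.src τ (a.src none) - τ a.loser := by
    rcases hP' with ⟨h, h'⟩ | ⟨h, h'⟩ <;> rw [h']
    · rw [hlow _ (by omega), Nat.sub_add_cancel (by omega)]
    · exact hhigh _ h (by omega)
  refine (memTheta_iff _ _ I).2 ⟨hsym.arrowBtInv a, ?_, fun j hj0 hj hjP hjP' => ?_⟩
  · rw [hSP', hend]
    linarith
  rw [hSP']
  rcases lt_trichotomy j q with hj1 | rfl | hj1
  · rw [hlow j hj1]
    linarith [hgt (j + 1) (by omega) (by omega) (by omega) (by omega)]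
  · rw [hmid]
    linarith [hτ.prefixSum_star_le (j := j + 1) (by omega) (by omega), hsym a.winner]
  · rw [hhigh j hj1 hj]
    linarith [hgt j hj0 hj (by omega) (by omega)]

end steps

/-- If `γ` is an arrow from `π` to `π'`, then `(B*_γ)⁻¹·Θ_π ⊆ Θ_{π'}`: the open cone of
admissible suspension data is forward-invariant under the inverse transpose of the
transition matrix. -/
theorem theta_forward_invariant
    {d : ℕ} (I : Inv d) (a : Arrow d I) (τ : Letter d → ℝ)
    (hτ : MemTheta I a.src τ) :
    MemTheta I a.dst (arrowBtInv I a τ) := by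
  rcases a.ok with ⟨hL, hw, hl⟩ | ⟨hR, hl, hw⟩
  · exact memTheta_arrowBtInv_of_leftOpTo hL hw hl hτ
  · exact memTheta_arrowBtInv_of_rightOpTo hR hl hw hτ

end Rauzy
end

section
/- For every irreducible permutation π in a Rauzy class with involution, the closed cone Θ'_π (defined by the non-strict versions of the inequalities defining Θ_π, excluding 0) is non-empty. -/
open Finset

namespace Rauzy

variable {d : ℕ}

def gs (π : RPerm d) (τ : Letter d → ℝ) (k : ℕ) : ℝ :=
  ∑ a ∈ univ.filter (fun a => ((π (some a) : Pos d) : ℕ) < k), τ a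

lemma letter_inj (π : RPerm d) {a b : Letter d}
    (h : ((π (some a)) : ℕ) = ((π (some b)) : ℕ)) : a = b := by
  have := π.injective (Fin.val_injective h)
  exact Option.some_injective _ this

lemma pos_ne_star (π : RPerm d) (a : Letter d) :
    ((π (some a)) : ℕ) ≠ ((π none) : ℕ) := by
  intro h
  exact Option.some_ne_none a (π.injective (Fin.val_injective h))

lemma pos_le (π : RPerm d) (a : Letter d) : ((π (some a)) : ℕ) ≤ 2*d :=
  Nat.lt_succ_iff.mp (π (some a)).isLt

lemma gs_zero (π : RPerm d) (τ : Letter d → ℝ) : gs π τ 0 = 0 := by simp [gs]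

lemma gs_total (π : RPerm d) (τ : Letter d → ℝ) : gs π τ (2*d+1) = ∑ a, τ a := by
  unfold gs
  rw [filter_true_of_mem]
  intro a _
  exact (π (some a)).isLt

lemma gs_succ_letter (π : RPerm d) (τ : Letter d → ℝ) {b : Letter d} {k : ℕ}
    (h : ((π (some b)) : ℕ) = k) : gs π τ (k+1) = gs π τ k + τ b := by
  unfold gs
  have : (univ.filter (fun a => ((π (some a) : Pos d) : ℕ) < k+1))
      = insert b (univ.filter (fun a => ((π (some a) : Pos d) : ℕ) < k)) := by
    ext x
    simp only [mem_insert, mem_filter, mem_univ, true_and]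
    constructor
    · intro hx
      rcases Nat.lt_succ_iff_lt_or_eq.mp hx with h1 | h1
      · exact Or.inr h1
      · exact Or.inl (letter_inj π (h1.trans h.symm))
    · rintro (rfl | hx) <;> omega
  rw [this, sum_insert (by simp [h])]
  ring

lemma gs_succ_star (π : RPerm d) (τ : Letter d → ℝ) {k : ℕ}
    (h : ((π none) : ℕ) = k) : gs π τ (k+1) = gs π τ k := by
  unfold gs
  apply sum_congr _ (fun _ _ => rfl)
  ext x
  simp only [mem_filter, mem_univ, true_and]
  have := pos_ne_star π x
  omega

/-- interval sum from k to j -/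
lemma gs_split (π : RPerm d) (τ : Letter d → ℝ) {k j : ℕ} (h : k ≤ j) :
    gs π τ j = gs π τ k
      + ∑ a ∈ univ.filter (fun a => k ≤ ((π (some a) : Pos d) : ℕ) ∧ ((π (some a) : Pos d) : ℕ) < j), τ a := by
  unfold gs
  rw [← sum_filter_add_sum_filter_not
    (univ.filter (fun a => ((π (some a) : Pos d) : ℕ) < j)) (fun a => ((π (some a) : Pos d) : ℕ) < k)]
  rw [filter_filter, filter_filter]
  congr 1
  · congr 1
    ext x
    simp only [mem_filter, mem_univ, true_and]
    omega
  · congr 1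
    ext x
    simp only [mem_filter, mem_univ, true_and, not_lt]
    omega

/-- The key reformulation data. -/
def Good (I : Inv d) (π : RPerm d) (τ : Letter d → ℝ) : Prop :=
  Sym I τ ∧ τ ≠ 0 ∧
  (∀ k, 1 ≤ k → k ≤ 2*d → gs π τ ((π none : Pos d) : ℕ) ≤ gs π τ k) ∧
  gs π τ (2*d+1) = 2 * gs π τ ((π none : Pos d) : ℕ)

lemma sum_left (π : RPerm d) (τ : Letter d → ℝ) :
    ∑ a ∈ univ.filter (fun a => π (some a) < π none), τ a = gs π τ ((π none : Pos d) : ℕ) := by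
  unfold gs
  have : (univ.filter (fun a => π (some a) < π none))
      = univ.filter (fun a => ((π (some a) : Pos d) : ℕ) < ((π none : Pos d) : ℕ)) := by
    ext x
    simp only [mem_filter, mem_univ, true_and, Fin.lt_def]
  rw [this]

lemma sum_right (π : RPerm d) (τ : Letter d → ℝ) :
    ∑ a ∈ univ.filter (fun a => π none < π (some a)), τ a
      = gs π τ (2*d+1) - gs π τ ((π none : Pos d) : ℕ) := by
  have h := gs_split π τ (k := ((π none : Pos d) : ℕ)) (j := 2*d+1)
    (Nat.lt_succ_iff.mp (π none).isLt |>.trans (Nat.le_succ _) )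
  rw [h]
  have : (univ.filter (fun a => π none < π (some a)))
      = univ.filter (fun a => ((π none : Pos d) : ℕ) ≤ ((π (some a) : Pos d) : ℕ)
          ∧ ((π (some a) : Pos d) : ℕ) < 2*d+1) := by
    ext x
    simp only [mem_filter, mem_univ, true_and, Fin.lt_def]
    have h1 := pos_ne_star π x
    have h2 := (π (some x)).isLt
    omega
  rw [this]; ring

lemma balanced_iff (π : RPerm d) (τ : Letter d → ℝ) :
    Balanced π τ ↔ gs π τ (2*d+1) = 2 * gs π τ ((π none : Pos d) : ℕ) := by
  unfold Balanced
  rw [sum_left, sum_right]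
  constructor <;> intro h <;> linarith

lemma suffix_sum (π : RPerm d) (τ : Letter d → ℝ) (k : Pos d) (h : k < π none) :
    ∑ a ∈ univ.filter (fun a => k ≤ π (some a) ∧ π (some a) < π none), τ a
      = gs π τ ((π none : Pos d) : ℕ) - gs π τ (k : ℕ) := by
  have h' : (k : ℕ) ≤ ((π none : Pos d) : ℕ) := le_of_lt h
  rw [gs_split π τ h']
  have : (univ.filter (fun a => k ≤ π (some a) ∧ π (some a) < π none))
      = univ.filter (fun a => (k:ℕ) ≤ ((π (some a) : Pos d) : ℕ)
          ∧ ((π (some a) : Pos d) : ℕ) < ((π none : Pos d) : ℕ)) := by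
    ext x
    simp only [mem_filter, mem_univ, true_and, Fin.le_def, Fin.lt_def]
  rw [this]; ring

lemma prefix_sum (π : RPerm d) (τ : Letter d → ℝ) (k : Pos d) (h : π none < k) :
    ∑ a ∈ univ.filter (fun a => π none < π (some a) ∧ π (some a) ≤ k), τ a
      = gs π τ ((k : ℕ)+1) - gs π τ ((π none : Pos d) : ℕ) := by
  have hs : gs π τ (((π none : Pos d) : ℕ)+1) = gs π τ ((π none : Pos d):ℕ) := gs_succ_star π τ rfl
  have h' : ((π none : Pos d) : ℕ) + 1 ≤ (k : ℕ) + 1 := by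
    have := Fin.lt_def.mp h; omega
  rw [gs_split π τ h', hs]
  have : (univ.filter (fun a => π none < π (some a) ∧ π (some a) ≤ k))
      = univ.filter (fun a => ((π none : Pos d):ℕ)+1 ≤ ((π (some a) : Pos d) : ℕ)
          ∧ ((π (some a) : Pos d) : ℕ) < (k:ℕ)+1) := by
    ext x
    simp only [mem_filter, mem_univ, true_and, Fin.le_def, Fin.lt_def]
    omega
  rw [this]; ring

lemma memTheta'_iff_good (I : Inv d) (π : RPerm d) (τ : Letter d → ℝ) :
    MemTheta' I π τ ↔ Good I π τ := by
  set m := ((π none : Pos d) : ℕ) with hm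
  have hmle : m ≤ 2*d := Nat.lt_succ_iff.mp (π none).isLt
  constructor
  · rintro ⟨⟨hsym, hbal⟩, hne, hpre, hsuf⟩
    refine ⟨hsym, hne, ?_, (balanced_iff π τ).mp hbal⟩
    intro k hk1 hk2
    rcases lt_trichotomy k m with h | h | h
    · have hfin : ((⟨k, by omega⟩ : Pos d) : ℕ) = k := rfl
      have := hsuf ⟨k, by omega⟩ (by omega) (by rw [Fin.lt_def]; exact h)
      rw [suffix_sum π τ _ (by rw [Fin.lt_def]; exact h)] at this
      simp only [hfin] at this
      linarith
    · rw [h]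
    · rcases Nat.lt_or_ge k (m+1) with h2 | h2
      · omega
      rcases Nat.eq_or_lt_of_le h2 with h3 | h3
      · rw [← h3]
        rw [gs_succ_star π τ rfl]
      · -- k ≥ m+2, use prefix at k-1
        have hfin : ((⟨k-1, by omega⟩ : Pos d) : ℕ) = k-1 := rfl
        have := hpre ⟨k-1, by omega⟩ (by rw [Fin.lt_def]; simp [hfin]; omega)
          (by rw [hfin]; omega)
        rw [prefix_sum π τ _ (by rw [Fin.lt_def]; simp [hfin]; omega)] at this
        rw [hfin] at this
        have hk1' : k - 1 + 1 = k := by omega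
        rw [hk1'] at this
        linarith
  · rintro ⟨hsym, hne, hineq, hbal⟩
    refine ⟨⟨hsym, (balanced_iff π τ).mpr hbal⟩, hne, ?_, ?_⟩
    · intro k hk hk2
      rw [prefix_sum π τ k hk]
      have := hineq ((k:ℕ)+1) (by omega) (by omega)
      linarith
    · intro k hk hk2
      rw [suffix_sum π τ k hk2]
      have hlt : (k:ℕ) < m := Fin.lt_def.mp hk2
      have := hineq (k:ℕ) (by omega) (by omega)
      linarith

lemma sum_pair_ite (s : Finset (Letter d)) {b c : Letter d} (hbc : b ≠ c) (t : ℝ) :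
    ∑ x ∈ s, (if x = b ∨ x = c then t else 0)
      = (if b ∈ s then t else 0) + (if c ∈ s then t else 0) := by
  have hpt : ∀ x, (if x = b ∨ x = c then t else 0)
      = (if x = b then t else 0) + (if x = c then t else 0) := by
    intro x
    by_cases h1 : x = b <;> by_cases h2 : x = c <;> simp_all
  simp_rw [hpt]
  rw [sum_add_distrib, sum_ite_eq' s b (fun _ => t), sum_ite_eq' s c (fun _ => t)]

lemma gs_modif (π' : RPerm d) (τ : Letter d → ℝ) {b c : Letter d} (hbc : b ≠ c) (t : ℝ) (k : ℕ) :
    gs π' (fun x => τ x - (if x = b ∨ x = c then t else 0)) k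
      = gs π' τ k - ((if ((π' (some b)) : ℕ) < k then t else 0)
          + (if ((π' (some c)) : ℕ) < k then t else 0)) := by
  unfold gs
  rw [sum_sub_distrib, sum_pair_ite _ hbc]
  congr 2 <;> simp [mem_filter]

/-- relate gs of π' to gs of π when filters agree -/
lemma gs_eq_of_iff (π π' : RPerm d) (τ : Letter d → ℝ) (k j : ℕ)
    (h : ∀ x : Letter d, ((π' (some x)) : ℕ) < k ↔ ((π (some x)) : ℕ) < j) :
    gs π' τ k = gs π τ j := by
  unfold gs
  congr 1
  ext x
  simp only [mem_filter, mem_univ, true_and]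
  exact h x

lemma gs_eq_insert (π π' : RPerm d) (τ : Letter d → ℝ) (k j : ℕ) (α : Letter d)
    (hj : ((π (some α)) : ℕ) < j) (hk : ¬ (((π' (some α)) : ℕ) < k))
    (h : ∀ x : Letter d, x ≠ α → (((π' (some x)) : ℕ) < k ↔ ((π (some x)) : ℕ) < j)) :
    gs π' τ k = gs π τ j - τ α := by
  unfold gs
  have : (univ.filter (fun a => ((π (some a) : Pos d) : ℕ) < j))
      = insert α (univ.filter (fun a => ((π' (some a) : Pos d) : ℕ) < k)) := by
    ext x
    simp only [mem_insert, mem_filter, mem_univ, true_and]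
    by_cases hx : x = α
    · subst hx; simp [hj]
    · simp only [hx, false_or]
      exact (h x hx).symm
  rw [this, sum_insert (by simp [hk])]
  ring

lemma right_transport (hd : 1 ≤ d) (I : Inv d) {π π' : RPerm d} (h : RightOpTo I π π')
    {τ : Letter d → ℝ} (ht : Good I π τ) :
    ∃ τ' : Letter d → ℝ, Good I π' τ' := by
  obtain ⟨-, -, α, β, hα, hβ, hne, h0, h1, h2⟩ := h
  obtain ⟨hsym, hτne, hint, hbal⟩ := ht
  set m : ℕ := ((π none : Pos d) : ℕ) with hm
  set r : ℕ := ((π (some (I.i β)) : Pos d) : ℕ) with hr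
  have hpα : ((π (some α)) : ℕ) = 0 := by rw [hα]; rfl
  have hpβ : ((π (some β)) : ℕ) = 2*d := by rw [hβ]; simp
  have hαβ : α ≠ β := by
    intro hh; rw [hh, hpβ] at hpα; omega
  have hβiβ : β ≠ I.i β := fun hh => I.nofix β (hh.symm)
  have hr0 : r ≠ 0 := by
    intro hh
    exact hne (letter_inj π (by rw [hpα, ← hr, hh]) : α = I.i β)
  have hr2d : r ≠ 2*d := by
    intro hh
    exact hβiβ (letter_inj π (by rw [hpβ, ← hr, hh]))
  have hrle : r ≤ 2*d := pos_le π (I.i β)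
  have hm0 : m ≠ 0 := fun hh => pos_ne_star π α (by rw [hpα, ← hm, hh])
  have hmr : m ≠ r := fun hh => pos_ne_star π (I.i β) (by rw [← hr, ← hm, hh])
  have hmle : m ≤ 2*d := Nat.lt_succ_iff.mp (π none).isLt
  have q0 : ∀ x, r ≤ ((π x) : ℕ) → ((π' x) : ℕ) = ((π x) : ℕ) := by
    intro x hx
    rw [h0 x (by rw [Fin.le_def]; exact hx)]
  have q1 : ((π' (some α)) : ℕ) + 1 = r := h1
  have q2 : ∀ x, x ≠ some α → ((π x) : ℕ) < r → ((π' x) : ℕ) + 1 = ((π x) : ℕ) := by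
    intro x hx hlt
    exact h2 x hx (by rw [Fin.lt_def]; exact hlt)
  set τ' : Letter d → ℝ := fun x => τ x - (if x = β ∨ x = I.i β then τ α else 0) with hτ'
  have qβ : ((π' (some β)) : ℕ) = 2*d := by rw [q0 _ (by omega)]; exact hpβ
  have qiβ : ((π' (some (I.i β))) : ℕ) = r := q0 _ (le_of_eq hr)
  have hq2' : ∀ x : Letter d, x ≠ α → ((π (some x)) : ℕ) < r →
      ((π' (some x)) : ℕ) + 1 = ((π (some x)) : ℕ) := by
    intro x hx hlt
    exact q2 (some x) (by simpa using hx) hlt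
  -- range identities
  have hRa : ∀ j : ℕ, j < r → gs π' τ' j = gs π τ (j+1) - τ α := by
    intro j hj
    rw [hτ', gs_modif π' τ hβiβ (τ α) j]
    rw [if_neg (by omega : ¬ ((π' (some β)) : ℕ) < j), if_neg (by omega : ¬ ((π' (some (I.i β))) : ℕ) < j)]
    rw [gs_eq_insert π π' τ j (j+1) α (by omega) (by omega)]
    · ring
    · intro x hx
      by_cases hc : r ≤ ((π (some x)) : ℕ)
      · have := q0 (some x) hc
        omega
      · have := hq2' x hx (by omega)
        omega
  have hRb : gs π' τ' r = gs π τ r := by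
    rw [hτ', gs_modif π' τ hβiβ (τ α) r]
    rw [if_neg (by omega : ¬ ((π' (some β)) : ℕ) < r), if_neg (by omega : ¬ ((π' (some (I.i β))) : ℕ) < r)]
    rw [gs_eq_of_iff π' π τ r r]
    · ring
    · intro x
      by_cases hx : x = α
      · subst hx; omega
      by_cases hc : r ≤ ((π (some x)) : ℕ)
      · have := q0 (some x) hc
        omega
      · have := hq2' x hx (by omega)
        omega
  have hRc : ∀ j : ℕ, r < j → j ≤ 2*d → gs π' τ' j = gs π τ j - τ α := by
    intro j hj1 hj2
    rw [hτ', gs_modif π' τ hβiβ (τ α) j]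
    rw [if_neg (by omega : ¬ ((π' (some β)) : ℕ) < j), if_pos (by omega : ((π' (some (I.i β))) : ℕ) < j)]
    rw [gs_eq_of_iff π' π τ j j]
    · ring
    · intro x
      by_cases hx : x = α
      · subst hx; omega
      by_cases hc : r ≤ ((π (some x)) : ℕ)
      · have := q0 (some x) hc
        omega
      · have := hq2' x hx (by omega)
        omega
  have hRd : gs π' τ' (2*d+1) = gs π τ (2*d+1) - 2 * τ α := by
    rw [hτ', gs_modif π' τ hβiβ (τ α) (2*d+1)]
    rw [if_pos (by omega : ((π' (some β)) : ℕ) < 2*d+1), if_pos (by omega : ((π' (some (I.i β))) : ℕ) < 2*d+1)]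
    rw [gs_eq_of_iff π' π τ (2*d+1) (2*d+1)]
    · ring
    · intro x
      have h1' := (π' (some x)).isLt
      have h2' := (π (some x)).isLt
      omega
  -- star position of π'
  have hm' : (((π' none) : ℕ) = m - 1 ∧ m < r) ∨ (((π' none) : ℕ) = m ∧ r < m) := by
    rcases Nat.lt_or_ge m r with hc | hc
    · left
      refine ⟨?_, hc⟩
      have := q2 none (by simp) hc
      omega
    · right
      exact ⟨q0 none (by omega), by omega⟩
  -- value of gs π' τ' at the new star position
  have hT' : gs π' τ' ((π' none : Pos d) : ℕ) = gs π τ m - τ α := by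
    rcases hm' with ⟨he, hc⟩ | ⟨he, hc⟩
    · rw [he, hRa (m-1) (by omega)]
      congr 2
      omega
    · rw [he, hRc m hc hmle]
  -- basic inequalities
  have hgs1 : gs π τ 1 = τ α := by
    have := gs_succ_letter π τ hpα
    rw [gs_zero] at this
    simpa using this
  have hταm : gs π τ m ≤ τ α := by
    rw [← hgs1]; exact hint 1 le_rfl (by omega)
  have hgsr1 : gs π τ (r+1) = gs π τ r + τ β := by
    rw [gs_succ_letter π τ (hr.symm : ((π (some (I.i β))) : ℕ) = r), hsym β]
  have hgs2d : gs π τ (2*d+1) = gs π τ (2*d) + τ β := by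
    have : 2*d+1 = 2*d + 1 := rfl
    rw [gs_succ_letter π τ hpβ]
  have hkey : 0 ≤ gs π τ r := by
    have e1 : gs π τ (r+1) ≥ gs π τ m := hint (r+1) (by omega) (by omega)
    have e2 : gs π τ (2*d) ≥ gs π τ m := hint (2*d) (by omega) le_rfl
    have e3 : τ β = 2 * gs π τ m - gs π τ (2*d) := by
      rw [← hbal, hgs2d]; ring
    have : gs π τ r = gs π τ (r+1) - τ β := by rw [hgsr1]; ring
    rw [this, e3]
    linarith
  refine ⟨τ', ?_, ?_, ?_, ?_⟩
  · -- Sym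
    intro a
    have hiff : (I.i a = β ∨ I.i a = I.i β) ↔ (a = β ∨ a = I.i β) := by
      constructor
      · rintro (hh | hh)
        · right; rw [← hh, I.invol]
        · left; have := congrArg I.i hh; rwa [I.invol, I.invol] at this
      · rintro (hh | hh)
        · right; rw [hh]
        · left; rw [hh, I.invol]
    simp only [hτ']
    rw [hsym a, if_congr hiff rfl rfl]
  · -- τ' ≠ 0
    intro hz
    have hα0 : τ α = 0 := by
      have := congrFun hz α
      simp only [hτ', Pi.zero_apply] at this
      have hne2 : ¬ (α = β ∨ α = I.i β) := by
        rintro (hh | hh)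
        · exact hαβ hh
        · exact hne hh
      rw [if_neg hne2] at this
      linarith
    apply hτne
    funext x
    have := congrFun hz x
    simp only [hτ', Pi.zero_apply] at this
    by_cases hx : x = β ∨ x = I.i β
    · rw [if_pos hx, hα0] at this; simpa using this
    · rw [if_neg hx] at this; simpa using this
  · -- inequalities
    intro k hk1 hk2
    rw [hT']
    rcases Nat.lt_trichotomy k r with hc | hc | hc
    · rw [hRa k hc]
      have := hint (k+1) (by omega) (by omega)
      linarith
    · subst hc
      rw [hRb]
      linarith
    · rw [hRc k hc hk2]
      have := hint k (by omega) hk2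
      linarith
  · -- balance
    rw [hRd, hT', hbal]
    ring

lemma left_transport (hd : 1 ≤ d) (I : Inv d) {π π' : RPerm d} (h : LeftOpTo I π π')
    {τ : Letter d → ℝ} (ht : Good I π τ) :
    ∃ τ' : Letter d → ℝ, Good I π' τ' := by
  obtain ⟨-, -, α, β, hα, hβ, hne, h0, h1, h2⟩ := h
  obtain ⟨hsym, hτne, hint, hbal⟩ := ht
  set m : ℕ := ((π none : Pos d) : ℕ) with hm
  set u : ℕ := ((π (some (I.i α)) : Pos d) : ℕ) with hu
  have hpα : ((π (some α)) : ℕ) = 0 := by rw [hα]; rfl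
  have hpβ : ((π (some β)) : ℕ) = 2*d := by rw [hβ]; simp
  have hαβ : α ≠ β := by
    intro hh; rw [hh, hpβ] at hpα; omega
  have hαiα : α ≠ I.i α := fun hh => I.nofix α (hh.symm)
  have hu0 : u ≠ 0 := by
    intro hh
    exact hαiα (letter_inj π (by rw [hpα, ← hu, hh]))
  have hu2d : u ≠ 2*d := by
    intro hh
    exact hne (letter_inj π (by rw [hpβ, ← hu, hh]) : β = I.i α)
  have hule : u ≤ 2*d := pos_le π (I.i α)
  have hm0 : m ≠ 0 := fun hh => pos_ne_star π α (by rw [hpα, ← hm, hh])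
  have hmu : m ≠ u := fun hh => pos_ne_star π (I.i α) (by rw [← hu, ← hm, hh])
  have hm2d : m ≠ 2*d := fun hh => pos_ne_star π β (by rw [hpβ, ← hm, hh])
  have hmle : m ≤ 2*d := Nat.lt_succ_iff.mp (π none).isLt
  have q0 : ∀ x, ((π x) : ℕ) ≤ u → ((π' x) : ℕ) = ((π x) : ℕ) := by
    intro x hx
    rw [h0 x (by rw [Fin.le_def]; exact hx)]
  have q1 : ((π' (some β)) : ℕ) = u + 1 := h1
  have q2 : ∀ x, x ≠ some β → u < ((π x) : ℕ) → ((π' x) : ℕ) = ((π x) : ℕ) + 1 := by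
    intro x hx hlt
    exact h2 x hx (by rw [Fin.lt_def]; exact hlt)
  set τ' : Letter d → ℝ := fun x => τ x - (if x = α ∨ x = I.i α then τ β else 0) with hτ'
  have qα : ((π' (some α)) : ℕ) = 0 := by rw [q0 _ (by omega)]; exact hpα
  have qiα : ((π' (some (I.i α))) : ℕ) = u := q0 _ (le_of_eq hu)
  have hq2' : ∀ x : Letter d, x ≠ β → u < ((π (some x)) : ℕ) →
      ((π' (some x)) : ℕ) = ((π (some x)) : ℕ) + 1 := by
    intro x hx hlt
    exact q2 (some x) (by simpa using hx) hlt
  -- range identities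
  have hLa : ∀ j : ℕ, 1 ≤ j → j ≤ u → gs π' τ' j = gs π τ j - τ β := by
    intro j hj1 hj2
    rw [hτ', gs_modif π' τ hαiα (τ β) j]
    rw [if_pos (by omega : ((π' (some α)) : ℕ) < j), if_neg (by omega : ¬ ((π' (some (I.i α))) : ℕ) < j)]
    rw [gs_eq_of_iff π' π τ j j]
    · ring
    · intro x
      by_cases hx : x = β
      · subst hx; omega
      by_cases hc : ((π (some x)) : ℕ) ≤ u
      · have := q0 (some x) hc
        omega
      · have := hq2' x hx (by omega)
        omega
  have hLb : gs π' τ' (u+1) = gs π τ (u+1) - 2 * τ β := by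
    rw [hτ', gs_modif π' τ hαiα (τ β) (u+1)]
    rw [if_pos (by omega : ((π' (some α)) : ℕ) < u+1), if_pos (by omega : ((π' (some (I.i α))) : ℕ) < u+1)]
    rw [gs_eq_of_iff π' π τ (u+1) (u+1)]
    · ring
    · intro x
      by_cases hx : x = β
      · subst hx; omega
      by_cases hc : ((π (some x)) : ℕ) ≤ u
      · have := q0 (some x) hc
        omega
      · have := hq2' x hx (by omega)
        omega
  have hLc : ∀ j : ℕ, u+2 ≤ j → j ≤ 2*d+1 → gs π' τ' j = gs π τ (j-1) - τ β := by
    intro j hj1 hj2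
    rw [hτ', gs_modif π' τ hαiα (τ β) j]
    rw [if_pos (by omega : ((π' (some α)) : ℕ) < j), if_pos (by omega : ((π' (some (I.i α))) : ℕ) < j)]
    have hswap : gs π τ (j-1) = gs π' τ j - τ β := by
      apply gs_eq_insert π' π τ (j-1) j β (by omega) (by omega)
      intro x hx
      by_cases hc : ((π (some x)) : ℕ) ≤ u
      · have := q0 (some x) hc
        omega
      · have := hq2' x hx (by omega)
        omega
    have : gs π' τ j = gs π τ (j-1) + τ β := by rw [hswap]; ring
    rw [this]
    ring
  -- star position of π'
  have hm' : (((π' none) : ℕ) = m ∧ m < u) ∨ (((π' none) : ℕ) = m + 1 ∧ u < m) := by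
    rcases Nat.lt_or_ge m u with hc | hc
    · exact Or.inl ⟨q0 none (by omega), hc⟩
    · right
      have hc' : u < m := by omega
      exact ⟨q2 none (by simp) hc', hc'⟩
  have hT' : gs π' τ' ((π' none : Pos d) : ℕ) = gs π τ m - τ β := by
    rcases hm' with ⟨he, hc⟩ | ⟨he, hc⟩
    · rw [he, hLa m (by omega) (by omega)]
    · rw [he, hLc (m+1) (by omega) (by omega)]
      norm_num
  have hgs1 : gs π τ 1 = τ α := by
    have := gs_succ_letter π τ hpα
    rw [gs_zero] at this
    simpa using this
  have hgsu1 : gs π τ (u+1) = gs π τ u + τ α := by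
    rw [gs_succ_letter π τ (hu.symm : ((π (some (I.i α))) : ℕ) = u), hsym α]
  have hgs2d : gs π τ (2*d+1) = gs π τ (2*d) + τ β := by
    rw [gs_succ_letter π τ hpβ]
  have hτβ : τ β = 2 * gs π τ m - gs π τ (2*d) := by
    rw [← hbal, hgs2d]; ring
  have hkey : gs π τ m - τ β ≤ gs π τ (u+1) - 2 * τ β := by
    have e1 : gs π τ u ≥ gs π τ m := hint u (by omega) (by omega)
    have e2 : gs π τ 1 ≥ gs π τ m := hint 1 le_rfl (by omega)
    have e3 : gs π τ (2*d) ≥ gs π τ m := hint (2*d) (by omega) le_rfl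
    rw [hgsu1, ← hgs1, hτβ]
    linarith
  refine ⟨τ', ?_, ?_, ?_, ?_⟩
  · -- Sym
    intro a
    have hiff : (I.i a = α ∨ I.i a = I.i α) ↔ (a = α ∨ a = I.i α) := by
      constructor
      · rintro (hh | hh)
        · right; rw [← hh, I.invol]
        · left; have := congrArg I.i hh; rwa [I.invol, I.invol] at this
      · rintro (hh | hh)
        · right; rw [hh]
        · left; rw [hh, I.invol]
    simp only [hτ']
    rw [hsym a, if_congr hiff rfl rfl]
  · -- τ' ≠ 0
    intro hz
    have hβ0 : τ β = 0 := by
      have := congrFun hz β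
      simp only [hτ', Pi.zero_apply] at this
      have hne2 : ¬ (β = α ∨ β = I.i α) := by
        rintro (hh | hh)
        · exact hαβ hh.symm
        · exact hne hh
      rw [if_neg hne2] at this
      linarith
    apply hτne
    funext x
    have := congrFun hz x
    simp only [hτ', Pi.zero_apply] at this
    by_cases hx : x = α ∨ x = I.i α
    · rw [if_pos hx, hβ0] at this; simpa using this
    · rw [if_neg hx] at this; simpa using this
  · -- inequalities
    intro k hk1 hk2
    rw [hT']
    rcases Nat.lt_trichotomy k (u+1) with hc | hc | hc
    · rw [hLa k hk1 (by omega)]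
      have := hint k hk1 hk2
      linarith
    · subst hc
      rw [hLb]
      exact hkey
    · rw [hLc k (by omega) (by omega)]
      have := hint (k-1) (by omega) (by omega)
      linarith
  · -- balance
    rw [hT', hLc (2*d+1) (by omega) le_rfl]
    have : 2*d+1-1 = 2*d := by omega
    rw [this, hτβ]
    ring

lemma sym_pair (I : Inv d) (b : Letter d) (t : ℝ) :
    Sym I (fun x => if x = b ∨ x = I.i b then t else 0) := by
  intro a
  have hiff : (I.i a = b ∨ I.i a = I.i b) ↔ (a = b ∨ a = I.i b) := by
    constructor
    · rintro (hh | hh)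
      · right; rw [← hh, I.invol]
      · left; have := congrArg I.i hh; rwa [I.invol, I.invol] at this
    · rintro (hh | hh)
      · right; rw [hh]
      · left; rw [hh, I.invol]
  simp only []
  rw [if_congr hiff rfl rfl]

lemma gs_pair (π : RPerm d) {b c : Letter d} (hbc : b ≠ c) (t : ℝ) (k : ℕ) :
    gs π (fun x => if x = b ∨ x = c then t else 0) k
      = (if ((π (some b)) : ℕ) < k then t else 0)
        + (if ((π (some c)) : ℕ) < k then t else 0) := by
  unfold gs
  rw [sum_pair_ite _ hbc]
  congr 1 <;> simp [mem_filter]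

lemma witnessA (I : Inv d) (π : RPerm d) {a : Letter d}
    (ha : ((π (some a)) : ℕ) = 0)
    (hia : ((π none) : ℕ) < ((π (some (I.i a))) : ℕ)) :
    ∃ τ : Letter d → ℝ, Good I π τ := by
  have haia : a ≠ I.i a := fun hh => I.nofix a hh.symm
  refine ⟨fun x => if x = a ∨ x = I.i a then 1 else 0, sym_pair I a 1, ?_, ?_, ?_⟩
  · intro hz
    have := congrFun hz a
    simp at this
  · intro k hk1 hk2
    rw [gs_pair π haia 1 k, gs_pair π haia 1 ((π none : Pos d) : ℕ)]
    have hm0 : ((π none) : ℕ) ≠ 0 := fun hh => pos_ne_star π a (by omega)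
    rw [if_pos (by omega : ((π (some a)) : ℕ) < k),
        if_pos (by omega : ((π (some a)) : ℕ) < ((π none : Pos d) : ℕ)),
        if_neg (by omega : ¬ ((π (some (I.i a))) : ℕ) < ((π none : Pos d) : ℕ))]
    by_cases hc : ((π (some (I.i a))) : ℕ) < k <;> simp [hc]
  · rw [gs_pair π haia 1 _, gs_pair π haia 1 ((π none : Pos d) : ℕ)]
    have hm0 : ((π none) : ℕ) ≠ 0 := fun hh => pos_ne_star π a (by omega)
    have hb1 := (π (some (I.i a))).isLt
    rw [if_pos (by omega : ((π (some a)) : ℕ) < 2*d+1),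
        if_pos (by omega : ((π (some (I.i a))) : ℕ) < 2*d+1),
        if_pos (by omega : ((π (some a)) : ℕ) < ((π none : Pos d) : ℕ)),
        if_neg (by omega : ¬ ((π (some (I.i a))) : ℕ) < ((π none : Pos d) : ℕ))]
    norm_num

lemma witnessB (I : Inv d) (π : RPerm d) {b : Letter d}
    (hb : ((π (some b)) : ℕ) = 2*d)
    (hib : ((π (some (I.i b))) : ℕ) < ((π none) : ℕ)) :
    ∃ τ : Letter d → ℝ, Good I π τ := by
  have hbib : b ≠ I.i b := fun hh => I.nofix b hh.symm
  have hmle : ((π none) : ℕ) ≤ 2*d := Nat.lt_succ_iff.mp (π none).isLt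
  have hm2d : ((π none) : ℕ) ≠ 2*d := fun hh => pos_ne_star π b (by omega)
  refine ⟨fun x => if x = b ∨ x = I.i b then -1 else 0, sym_pair I b (-1), ?_, ?_, ?_⟩
  · intro hz
    have := congrFun hz b
    simp at this
  · intro k hk1 hk2
    rw [gs_pair π hbib (-1) k, gs_pair π hbib (-1) ((π none : Pos d) : ℕ)]
    rw [if_neg (by omega : ¬ ((π (some b)) : ℕ) < k),
        if_neg (by omega : ¬ ((π (some b)) : ℕ) < ((π none : Pos d) : ℕ)),
        if_pos (by omega : ((π (some (I.i b))) : ℕ) < ((π none : Pos d) : ℕ))]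
    by_cases hc : ((π (some (I.i b))) : ℕ) < k <;> simp [hc]
  · rw [gs_pair π hbib (-1) _, gs_pair π hbib (-1) ((π none : Pos d) : ℕ)]
    rw [if_pos (by omega : ((π (some b)) : ℕ) < 2*d+1),
        if_pos (by omega : ((π (some (I.i b))) : ℕ) < 2*d+1),
        if_neg (by omega : ¬ ((π (some b)) : ℕ) < ((π none : Pos d) : ℕ)),
        if_pos (by omega : ((π (some (I.i b))) : ℕ) < ((π none : Pos d) : ℕ))]
    norm_num

def crossSet (I : Inv d) (π : RPerm d) : Finset (Letter d) :=
  univ.filter (fun a => ((π (some a)) : ℕ) < ((π none) : ℕ)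
    ∧ ((π none) : ℕ) < ((π (some (I.i a))) : ℕ))

lemma cross_grow (I : Inv d) {π π' : RPerm d}
    (h : LeftOpTo I π π' ∨ RightOpTo I π π')
    (hA : ∀ a : Letter d, π (some a) = 0 → ((π (some (I.i a))) : ℕ) < ((π none) : ℕ))
    (hB : ∀ b : Letter d, π (some b) = Fin.last (2*d) → ((π none) : ℕ) < ((π (some (I.i b))) : ℕ)) :
    (crossSet I π).card + 1 ≤ (crossSet I π').card := by
  set m : ℕ := ((π none : Pos d) : ℕ) with hm
  rcases h with ⟨-, -, α, β, hα, hβ, hne, h0, h1, h2⟩ | ⟨-, -, α, β, hα, hβ, hne, h0, h1, h2⟩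
  · -- left op : mover β, new crossing letter β
    set u : ℕ := ((π (some (I.i α)) : Pos d) : ℕ) with hu
    set r : ℕ := ((π (some (I.i β)) : Pos d) : ℕ) with hr
    have hpα : ((π (some α)) : ℕ) = 0 := by rw [hα]; rfl
    have hpβ : ((π (some β)) : ℕ) = 2*d := by rw [hβ]; simp
    have hum : u < m := hA α hα
    have hmr : m < r := hB β hβ
    have q0 : ∀ x, ((π x) : ℕ) ≤ u → ((π' x) : ℕ) = ((π x) : ℕ) := by
      intro x hx
      rw [h0 x (by rw [Fin.le_def]; exact hx)]
    have q2 : ∀ x, x ≠ some β → u < ((π x) : ℕ) → ((π' x) : ℕ) = ((π x) : ℕ) + 1 := by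
      intro x hx hlt
      exact h2 x hx (by rw [Fin.lt_def]; exact hlt)
    have hm' : ((π' none) : ℕ) = m + 1 := q2 none (by simp) (by omega)
    have hside : ∀ x : Letter d, x ≠ β →
        (((π (some x)) : ℕ) < m ↔ ((π' (some x)) : ℕ) < m + 1)
        ∧ (m < ((π (some x)) : ℕ) ↔ m + 1 < ((π' (some x)) : ℕ)) := by
      intro x hx
      have hxm := pos_ne_star π x
      by_cases hc : ((π (some x)) : ℕ) ≤ u
      · have := q0 (some x) hc
        omega
      · have := q2 (some x) (by simpa using hx) (by omega)
        omega
    have hsub : insert β (crossSet I π) ⊆ crossSet I π' := by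
      intro x hx
      simp only [crossSet, mem_insert, mem_filter, mem_univ, true_and] at hx ⊢
      rw [hm']
      rcases hx with hx0 | ⟨hx1, hx2⟩
      · rw [hx0]
        constructor
        · rw [h1]; omega
        · have hiββ : I.i β ≠ β := I.nofix β
          have := (hside (I.i β) hiββ).2
          omega
      · have hxβ : x ≠ β := by
          intro hh; rw [hh, hpβ] at hx1
          have : m ≤ 2*d := Nat.lt_succ_iff.mp (π none).isLt
          omega
        have hixβ : I.i x ≠ β := by
          intro hh
          have : x = I.i β := by
            have := congrArg I.i hh; rwa [I.invol] at this
          rw [this] at hx1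
          omega
        exact ⟨((hside x hxβ).1).mp hx1, ((hside (I.i x) hixβ).2).mp hx2⟩
    have hβnot : β ∉ crossSet I π := by
      simp only [crossSet, mem_filter, mem_univ, true_and, not_and]
      intro hh
      have : m ≤ 2*d := Nat.lt_succ_iff.mp (π none).isLt
      omega
    calc (crossSet I π).card + 1 = (insert β (crossSet I π)).card := (card_insert_of_notMem hβnot).symm
      _ ≤ (crossSet I π').card := card_le_card hsub
  · -- right op : mover α, new crossing letter I.i α
    set u : ℕ := ((π (some (I.i α)) : Pos d) : ℕ) with hu
    set r : ℕ := ((π (some (I.i β)) : Pos d) : ℕ) with hr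
    have hpα : ((π (some α)) : ℕ) = 0 := by rw [hα]; rfl
    have hpβ : ((π (some β)) : ℕ) = 2*d := by rw [hβ]; simp
    have hum : u < m := hA α hα
    have hmr : m < r := hB β hβ
    have hm0 : m ≠ 0 := by omega
    have q0 : ∀ x, r ≤ ((π x) : ℕ) → ((π' x) : ℕ) = ((π x) : ℕ) := by
      intro x hx
      rw [h0 x (by rw [Fin.le_def]; exact hx)]
    have q2 : ∀ x, x ≠ some α → ((π x) : ℕ) < r → ((π' x) : ℕ) + 1 = ((π x) : ℕ) := by
      intro x hx hlt
      exact h2 x hx (by rw [Fin.lt_def]; exact hlt)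
    have hm' : ((π' none) : ℕ) = m - 1 := by
      have := q2 none (by simp) (by omega)
      omega
    have hpzero : ∀ x : Letter d, ((π (some x)) : ℕ) = 0 → x = α := by
      intro x hx
      exact letter_inj π (by omega)
    have hside : ∀ x : Letter d, x ≠ α →
        (((π (some x)) : ℕ) < m ↔ ((π' (some x)) : ℕ) < m - 1)
        ∧ (m < ((π (some x)) : ℕ) ↔ m - 1 < ((π' (some x)) : ℕ)) := by
      intro x hx
      have hxm := pos_ne_star π x
      have hx0 : ((π (some x)) : ℕ) ≠ 0 := fun hh => hx (hpzero x hh)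
      by_cases hc : ((π (some x)) : ℕ) < r
      · have := q2 (some x) (by simpa using hx) hc
        omega
      · have := q0 (some x) (by omega)
        omega
    have hsub : insert (I.i α) (crossSet I π) ⊆ crossSet I π' := by
      intro x hx
      simp only [crossSet, mem_insert, mem_filter, mem_univ, true_and] at hx ⊢
      rw [hm']
      rcases hx with hx0 | ⟨hx1, hx2⟩
      · rw [hx0]
        have hiαα : I.i α ≠ α := I.nofix α
        constructor
        · have := (hside (I.i α) hiαα).1
          omega
        · rw [I.invol]
          have : ((π' (some α)) : ℕ) + 1 = r := h1
          omega
      · have hxα : x ≠ α := by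
          intro hh; rw [hh] at hx2
          omega
        have hixα : I.i x ≠ α := by
          intro hh
          have hx' : x = I.i α := by
            have := congrArg I.i hh; rwa [I.invol] at this
          rw [hx'] at hx2
          rw [I.invol] at hx2
          omega
        exact ⟨((hside x hxα).1).mp hx1, ((hside (I.i x) hixα).2).mp hx2⟩
    have hnot : I.i α ∉ crossSet I π := by
      simp only [crossSet, mem_filter, mem_univ, true_and, not_and]
      intro hh
      rw [I.invol]
      omega
    calc (crossSet I π).card + 1 = (insert (I.i α) (crossSet I π)).card := (card_insert_of_notMem hnot).symm
      _ ≤ (crossSet I π').card := card_le_card hsub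

def Step (I : Inv d) (a b : RPerm d) : Prop := LeftOpTo I a b ∨ RightOpTo I a b

lemma reach_sub (I : Inv d) {R : Set (RPerm d)} (hR : IsRauzyClass I R)
    {σ : RPerm d} (hσ : σ ∈ R) :
    ∀ ρ, Relation.ReflTransGen (Step I) σ ρ → ρ ∈ R := by
  intro ρ h
  induction h with
  | refl => exact hσ
  | tail _ hs ih => exact hR.2.2.1 _ ih _ hs

lemma reach_eq (I : Inv d) {R : Set (RPerm d)} (hR : IsRauzyClass I R)
    {σ : RPerm d} (hσ : σ ∈ R) :
    {ρ | Relation.ReflTransGen (Step I) σ ρ} = R := by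
  apply hR.2.2.2.1
  · intro ρ hρ
    exact reach_sub I hR hσ ρ hρ
  · exact ⟨σ, Relation.ReflTransGen.refl⟩
  · intro ρ hρ ρ' hs
    exact hρ.tail hs

lemma exists_op_out (hd : 1 ≤ d) (I : Inv d) {R : Set (RPerm d)} (hR : IsRauzyClass I R)
    {σ : RPerm d} (hσ : σ ∈ R) :
    ∃ σ' ∈ R, Step I σ σ' := by
  obtain ⟨a, hsrc, hdst, -⟩ := hR.2.2.2.2 ⟨0, by omega⟩
  have hstep : Step I a.src a.dst := by
    rcases a.ok with ⟨h, -, -⟩ | ⟨h, -, -⟩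
    · exact Or.inl h
    · exact Or.inr h
  have : a.src ∈ {ρ | Relation.ReflTransGen (Step I) σ ρ} := by
    rw [reach_eq I hR hσ]; exact hsrc
  rcases Relation.ReflTransGen.cases_head this with heq | ⟨b, hs, -⟩
  · exact ⟨a.dst, hdst, heq ▸ hstep⟩
  · exact ⟨b, hR.2.2.1 _ hσ _ hs, hs⟩

lemma exists_AB (hd : 1 ≤ d) (I : Inv d) {R : Set (RPerm d)} (hR : IsRauzyClass I R) :
    ∃ σ ∈ R,
      (∃ a : Letter d, ((σ (some a)) : ℕ) = 0 ∧ ((σ none) : ℕ) < ((σ (some (I.i a))) : ℕ))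
      ∨ (∃ b : Letter d, ((σ (some b)) : ℕ) = 2*d ∧ ((σ (some (I.i b))) : ℕ) < ((σ none) : ℕ)) := by
  by_contra hcon
  push_neg at hcon
  -- every vertex of R satisfies the hypotheses of cross_grow
  have hAB : ∀ σ ∈ R,
      (∀ a : Letter d, σ (some a) = 0 → ((σ (some (I.i a))) : ℕ) < ((σ none) : ℕ))
      ∧ (∀ b : Letter d, σ (some b) = Fin.last (2*d) → ((σ none) : ℕ) < ((σ (some (I.i b))) : ℕ)) := by
    intro σ hσ
    obtain ⟨h1, h2⟩ := hcon σ hσ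
    constructor
    · intro a ha
      have hv : ((σ (some a)) : ℕ) = 0 := by rw [ha]; rfl
      have := h1 a hv
      have hne := pos_ne_star σ (I.i a)
      omega
    · intro b hb
      have hv : ((σ (some b)) : ℕ) = 2*d := by rw [hb]; simp
      have := h2 b hv
      have hne := pos_ne_star σ (I.i b)
      omega
  have hstep : ∀ σ : {x : RPerm d // x ∈ R}, ∃ σ' : {x : RPerm d // x ∈ R}, Step I σ.1 σ'.1 := by
    intro ⟨σ, hσ⟩
    obtain ⟨σ', hσ', hs⟩ := exists_op_out hd I hR hσ
    exact ⟨⟨σ', hσ'⟩, hs⟩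
  choose nxt hnxt using hstep
  obtain ⟨σ0, hσ0⟩ := hR.1
  let f : ℕ → {x : RPerm d // x ∈ R} := fun n => Nat.rec ⟨σ0, hσ0⟩ (fun _ s => nxt s) n
  have hf : ∀ n, f (n+1) = nxt (f n) := fun n => rfl
  have hcard : ∀ n, n ≤ (crossSet I (f n).1).card := by
    intro n
    induction n with
    | zero => omega
    | succ n ih =>
      have hg := cross_grow I (hnxt (f n)) (hAB (f n).1 (f n).2).1 (hAB (f n).1 (f n).2).2
      rw [hf n]
      omega
  have h1 := hcard (2*d+1)
  have h2 : (crossSet I (f (2*d+1)).1).card ≤ 2*d := by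
    have := Finset.card_le_univ (crossSet I (f (2*d+1)).1)
    simpa using this
  omega


/-- For every irreducible permutation `π` in a Rauzy class with involution, the closed
cone `Θ'_π` (non-strict inequalities, excluding `0`) is non-empty. -/
theorem theta'_nonempty
    {d : ℕ} (hd : 2 ≤ d) (I : Inv d) (π : RPerm d) (hirr : Irreducible I π) :
    ∃ τ : Letter d → ℝ, MemTheta' I π τ := by
  obtain ⟨R, hR, hπ⟩ := hirr
  have hd1 : 1 ≤ d := by omega
  set S : Set (RPerm d) := {σ | σ ∈ R ∧ ∃ τ, Good I σ τ} with hS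
  have hsub : S ⊆ R := fun σ hσ => hσ.1
  have hinv : OpInvariant I S := by
    intro σ hσ σ' hs
    refine ⟨hR.2.2.1 σ hσ.1 σ' hs, ?_⟩
    obtain ⟨τ, hτ⟩ := hσ.2
    rcases hs with h | h
    · exact left_transport hd1 I h hτ
    · exact right_transport hd1 I h hτ
  have hne : S.Nonempty := by
    obtain ⟨σ, hσ, hAB⟩ := exists_AB hd1 I hR
    rcases hAB with ⟨a, h1, h2⟩ | ⟨b, h1, h2⟩
    · exact ⟨σ, hσ, witnessA I σ h1 h2⟩
    · exact ⟨σ, hσ, witnessB I σ h1 h2⟩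
  have hSR := hR.2.2.2.1 S hsub hne hinv
  have hπS : π ∈ S := by rw [hSR]; exact hπ
  obtain ⟨-, τ, hτ⟩ := hπS
  exact ⟨τ, (memTheta'_iff_good I π τ).mpr hτ⟩

end Rauzy
end
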